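/- arXiv:2012.09388 — 4 statements merged into one kernel-verified Lean document; each statement's English description precedes it below -/
import Mathlib

section
/- Recursion Theorem: for every PAL sentence φ there exists a static sentence ψ (a sentence containing no public announcement modality) such that φ and ψ are logically equivalent. -/
inductive Sentence (α agent : Type) : Type
  | atom : α → Sentence α agent
  | perp : Sentence α agent
  | imp : Sentence α agent → Sentence α agent → Sentence α agent
  | box : agent → Sentence α agent → Sentence α agent
  | announce : Sentence α agent → Sentence α agent → Sentence α agent

def Sentence.neg {α agent : Type} (φ : Sentence α agent) : Sentence α agent :=
  φ.imp .perp

def Sentence.and {α agent : Type} (φ ψ : Sentence α agent) : Sentence α agent :=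
  (φ.imp ψ.neg).neg

/-- An S5 Kripke model over worlds `W`. -/
structure Worlds (α agent W : Type) where
  f : W → α → Prop
  view : agent → W → W → Prop
  equiv : ∀ a : agent, Equivalence (view a)

/-- Restriction of a model to a predicate on worlds: remove all epistemic links
with an endpoint at a `¬P` world (keeping reflexive loops). -/
def Worlds.restrict {α agent W : Type} (M : Worlds α agent W) (P : W → Prop) :
    Worlds α agent W where
  f := M.f
  view := fun a s t => M.view a s t ∧ (s = t ∨ (P s ∧ P t))
  equiv := fun a => by
    constructor
    · intro s; exact ⟨(M.equiv a).refl s, Or.inl rfl⟩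
    · rintro s t ⟨h, rfl | ⟨hs, ht⟩⟩
      · exact ⟨(M.equiv a).symm h, Or.inl rfl⟩
      · exact ⟨(M.equiv a).symm h, Or.inr ⟨ht, hs⟩⟩
    · rintro s t u ⟨h1, h1'⟩ ⟨h2, h2'⟩
      refine ⟨(M.equiv a).trans h1 h2, ?_⟩
      rcases h1' with rfl | ⟨hs, ht⟩
      · exact h2'
      · rcases h2' with rfl | ⟨_, hu⟩
        · exact Or.inr ⟨hs, ht⟩
        · exact Or.inr ⟨hs, hu⟩

/-- Kripke semantics for PAL. -/
def eval {α agent W : Type} (M : Worlds α agent W) (s : W) :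
    Sentence α agent → Prop
  | .atom p => M.f s p
  | .perp => False
  | .imp φ ψ => eval M s φ → eval M s ψ
  | .box i φ => ∀ t : W, M.view i s t → eval M t φ
  | .announce φ ψ => eval M s φ → eval (M.restrict (fun t => eval M t φ)) s ψ

/-- Logical equivalence: same truth value at every pointed model. -/
def EquivSent {α agent : Type} (φ ψ : Sentence α agent) : Prop :=
  ∀ (W : Type) (M : Worlds α agent W) (s : W), eval M s φ ↔ eval M s ψ

/-- A sentence is static if it contains no public announcement modality. -/
inductive Static {α agent : Type} : Sentence α agent → Prop
  | atom (p : α) : Static (.atom p)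
  | perp : Static .perp
  | imp {φ ψ : Sentence α agent} : Static φ → Static ψ → Static (.imp φ ψ)
  | box (i : agent) {φ : Sentence α agent} : Static φ → Static (.box i φ)

/-- Hilbert-style proof system for S5. -/
inductive Provable {α agent : Type} : Sentence α agent → Prop
  | s1 (φ ψ : Sentence α agent) : Provable (φ.imp (ψ.imp φ))
  | s2 (φ ψ γ : Sentence α agent) : Provable ((φ.imp (ψ.imp γ)).imp ((φ.imp ψ).imp (φ.imp γ)))
  | s3 (φ : Sentence α agent) : Provable (φ.neg.neg.imp φ)
  | distr (i : agent) (φ ψ : Sentence α agent) :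
      Provable ((Sentence.box i (φ.imp ψ)).imp ((Sentence.box i φ).imp (Sentence.box i ψ)))
  | ref (i : agent) (φ : Sentence α agent) : Provable ((Sentence.box i φ).imp φ)
  | trans (i : agent) (φ : Sentence α agent) :
      Provable ((Sentence.box i (Sentence.box i φ)).imp (Sentence.box i φ))
  | sym (i : agent) (φ : Sentence α agent) :
      Provable ((Sentence.box i φ).neg.imp (Sentence.box i (Sentence.box i φ).neg))
  | mp {φ ψ : Sentence α agent} : Provable (φ.imp ψ) → Provable φ → Provable ψ
  | nec (i : agent) {φ : Sentence α agent} : Provable φ → Provable (Sentence.box i φ)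

/-- Finite conjunction of a list of sentences. -/
def conjList {α agent : Type} : List (Sentence α agent) → Sentence α agent
  | [] => Sentence.perp.neg
  | φ :: l => φ.and (conjList l)

/-- A set of sentences is consistent if no finite conjunction of its members
provably implies `⊥`. -/
def ConsistentSet {α agent : Type} (Γ : Sentence α agent → Prop) : Prop :=
  ∀ L : List (Sentence α agent), (∀ φ ∈ L, Γ φ) → ¬ Provable ((conjList L).imp .perp)

/-- Maximal consistent set: consistent and containing `φ` or `¬φ` for each `φ`. -/
def MaximalConsistent {α agent : Type} (Γ : Sentence α agent → Prop) : Prop :=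
  ConsistentSet Γ ∧ ∀ φ : Sentence α agent, Γ φ ∨ Γ φ.neg

/-- Push an announcement of `φ` through a (static) sentence using the
reduction axioms. -/
def red {α agent : Type} (φ : Sentence α agent) : Sentence α agent → Sentence α agent
  | .atom p => φ.imp (.atom p)
  | .perp => φ.imp .perp
  | .imp ψ χ => (red φ ψ).imp (red φ χ)
  | .box i ψ => φ.imp (.box i (red φ ψ))
  | .announce ψ χ => .announce ψ χ

lemma red_static {α agent : Type} {φ ψ : Sentence α agent}
    (hφ : Static φ) (hψ : Static ψ) : Static (red φ ψ) := by
  induction hψ with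
  | atom p => exact .imp hφ (.atom p)
  | perp => exact .imp hφ .perp
  | imp _ _ ih1 ih2 => exact .imp ih1 ih2
  | box i _ ih => exact .imp hφ (.box i ih)

lemma red_eval {α agent : Type} (φ : Sentence α agent) {ψ : Sentence α agent}
    (hψ : Static ψ) :
    ∀ (W : Type) (M : Worlds α agent W) (s : W),
      eval M s (.announce φ ψ) ↔ eval M s (red φ ψ) := by
  induction hψ with
  | atom p => intro W M s; exact Iff.rfl
  | perp => intro W M s; exact Iff.rfl
  | imp h1 h2 ih1 ih2 =>
    intro W M s
    simp only [red, eval] at *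
    rw [← ih1, ← ih2]
    constructor
    · intro h ha hφ; exact h hφ (ha hφ)
    · intro h hφ hb; exact h (fun _ => hb) hφ
  | @box i ψ h ih =>
    intro W M s
    simp only [red, eval]
    constructor
    · intro h hφ t hv
      exact (ih W M t).mp (fun hφt => h hφ t ⟨hv, Or.inr ⟨hφ, hφt⟩⟩)
    · intro h hφ t hvt
      obtain ⟨hv, h' | ⟨hs, ht⟩⟩ := hvt
      · subst h'; exact (ih W M _).mpr (h hφ _ hv) hφ
      · exact (ih W M t).mpr (h hφ t hv) ht

lemma equiv_refl {α agent : Type} (φ : Sentence α agent) : EquivSent φ φ :=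
  fun _ _ _ => Iff.rfl

lemma restrict_congr {α agent W : Type} (M : Worlds α agent W) {P Q : W → Prop}
    (h : ∀ t, P t ↔ Q t) : M.restrict P = M.restrict Q := by
  have : P = Q := funext fun t => propext (h t)
  rw [this]

lemma equiv_announce {α agent : Type} {φ φ' ψ ψ' : Sentence α agent}
    (h1 : EquivSent φ φ') (h2 : EquivSent ψ ψ') :
    EquivSent (.announce φ ψ) (.announce φ' ψ') := by
  intro W M s
  simp only [eval]
  rw [restrict_congr M (fun t => h1 W M t)]
  constructor
  · intro h hφ'
    exact (h2 _ _ _).mp (h ((h1 W M s).mpr hφ'))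
  · intro h hφ
    exact (h2 _ _ _).mpr (h ((h1 W M s).mp hφ))

theorem recursion_theorem {α agent : Type} (φ : Sentence α agent) :
    ∃ ψ : Sentence α agent, EquivSent φ ψ ∧ Static ψ := by
  induction φ with
  | atom p => exact ⟨.atom p, equiv_refl _, .atom p⟩
  | perp => exact ⟨.perp, equiv_refl _, .perp⟩
  | imp φ ψ ih1 ih2 =>
    obtain ⟨φ', he1, hs1⟩ := ih1
    obtain ⟨ψ', he2, hs2⟩ := ih2
    exact ⟨φ'.imp ψ', fun W M s => imp_congr (he1 W M s) (he2 W M s), .imp hs1 hs2⟩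
  | box i φ ih =>
    obtain ⟨φ', he, hs⟩ := ih
    refine ⟨.box i φ', fun W M s => ?_, .box i hs⟩
    simp only [eval]
    exact forall_congr' fun t => imp_congr Iff.rfl (he W M t)
  | announce φ ψ ih1 ih2 =>
    obtain ⟨φ', he1, hs1⟩ := ih1
    obtain ⟨ψ', he2, hs2⟩ := ih2
    refine ⟨red φ' ψ', fun W M s => ?_, red_static hs1 hs2⟩
    exact (equiv_announce he1 he2 W M s).trans (red_eval φ' hs2 W M s)
end

section
/- Reduction lemma: if φ and ψ are static PAL sentences, then there exists a static sentence γ logically equivalent to [!φ]ψ. -/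
theorem reduction_lemma {α agent : Type} (φ ψ : Sentence α agent)
    (hφ : Static φ) (hψ : Static ψ) :
    ∃ γ : Sentence α agent, EquivSent (Sentence.announce φ ψ) γ ∧ Static γ := by
  induction hψ with
  | atom p => exact ⟨φ.imp (.atom p), fun W M s => Iff.rfl, .imp hφ (.atom p)⟩
  | perp => exact ⟨φ.imp .perp, fun W M s => Iff.rfl, .imp hφ .perp⟩
  | imp h1 h2 ih1 ih2 =>
    obtain ⟨γ1, e1, s1⟩ := ih1
    obtain ⟨γ2, e2, s2⟩ := ih2
    refine ⟨γ1.imp γ2, fun W M s => ?_, .imp s1 s2⟩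
    rw [show eval M s (γ1.imp γ2) = (eval M s γ1 → eval M s γ2) from rfl,
      ← e1 W M s, ← e2 W M s]
    simp only [eval]
    constructor
    · intro h h1 hp; exact h hp (h1 hp)
    · intro h hp h1; exact h (fun _ => h1) hp
  | box i h ih =>
    obtain ⟨γ, e, sγ⟩ := ih
    refine ⟨φ.imp (.box i (φ.imp γ)), fun W M s => ?_, .imp hφ (.box i (.imp hφ sγ))⟩
    simp only [eval]
    constructor
    · intro h hp t hv hpt
      rw [← e W M t]; intro _
      exact h hp t ⟨hv, Or.inr ⟨hp, hpt⟩⟩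
    · rintro h hp t ⟨hv, hc⟩
      have hpt : eval M t φ := by
        rcases hc with rfl | ⟨_, hpt⟩
        · exact hp
        · exact hpt
      have ht := h hp t hv hpt
      rw [← e W M t] at ht
      exact ht hpt
end

section
/- Completeness of S5: assuming sentences are encodable, every static sentence that holds at every world of every S5 Kripke model (every model whose accessibility relations are equivalence relations) is provable in the Hilbert-style S5 proof system. -/
namespace S5C

open Sentence Provable

variable {α agent : Type}

/-- Derivations from a set of hypotheses. -/
inductive Deriv (Γ : Sentence α agent → Prop) : Sentence α agent → Prop
  | ax {φ} : Provable φ → Deriv Γ φ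
  | hyp {φ} : Γ φ → Deriv Γ φ
  | mp {φ ψ} : Deriv Γ (φ.imp ψ) → Deriv Γ φ → Deriv Γ ψ

def Ins (φ : Sentence α agent) (Γ : Sentence α agent → Prop) : Sentence α agent → Prop :=
  fun ψ => ψ = φ ∨ Γ ψ

def Emp : Sentence α agent → Prop := fun _ => False

theorem prov_id (φ : Sentence α agent) : Provable (φ.imp φ) :=
  Provable.mp (Provable.mp (Provable.s2 φ (φ.imp φ) φ) (Provable.s1 φ (φ.imp φ)))
    (Provable.s1 φ φ)

theorem Deriv.mono {Γ Δ : Sentence α agent → Prop} {φ} (h : Deriv Γ φ)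
    (sub : ∀ ψ, Γ ψ → Δ ψ) : Deriv Δ φ := by
  induction h with
  | ax h => exact .ax h
  | hyp h => exact .hyp (sub _ h)
  | mp _ _ ih1 ih2 => exact .mp ih1 ih2

theorem deduction {Γ : Sentence α agent → Prop} {φ ψ}
    (h : Deriv (Ins φ Γ) ψ) : Deriv Γ (φ.imp ψ) := by
  induction h with
  | ax h => exact .ax (Provable.mp (Provable.s1 _ _) h)
  | hyp h =>
    rcases h with rfl | h
    · exact .ax (prov_id _)
    · exact .mp (.ax (Provable.s1 _ _)) (.hyp h)
  | mp _ _ ih1 ih2 => exact .mp (.mp (.ax (Provable.s2 _ _ _)) ih1) ih2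

theorem deriv_empty {φ : Sentence α agent} (h : Deriv Emp φ) : Provable φ := by
  induction h with
  | ax h => exact h
  | hyp h => exact h.elim
  | mp _ _ ih1 ih2 => exact ih1.mp ih2

theorem prov_trans {a b c : Sentence α agent}
    (h1 : Provable (a.imp b)) (h2 : Provable (b.imp c)) : Provable (a.imp c) :=
  Provable.mp (Provable.mp (Provable.s2 a b c)
    (Provable.mp (Provable.s1 (b.imp c) a) h2)) h1

theorem efq (φ : Sentence α agent) : Provable (Sentence.perp.imp φ) := by
  apply deriv_empty; apply deduction
  exact .mp (.ax (Provable.s3 φ))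
    (.mp (.ax (Provable.s1 Sentence.perp φ.neg)) (.hyp (Or.inl rfl)))

theorem contrapose1 {a b : Sentence α agent} (h : Provable (a.imp b)) :
    Provable (b.neg.imp a.neg) := by
  apply deriv_empty; apply deduction; apply deduction
  exact .mp (.hyp (Or.inr (Or.inl rfl))) (.mp (.ax h) (.hyp (Or.inl rfl)))

theorem and_intro (a b : Sentence α agent) : Provable (a.imp (b.imp (a.and b))) := by
  apply deriv_empty; apply deduction; apply deduction; apply deduction
  exact .mp (.mp (.hyp (Or.inl rfl)) (.hyp (Or.inr (Or.inr (Or.inl rfl)))))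
    (.hyp (Or.inr (Or.inl rfl)))

theorem and_left (a b : Sentence α agent) : Provable ((a.and b).imp a) := by
  apply deriv_empty; apply deduction
  apply Deriv.mp (.ax (Provable.s3 a))
  apply deduction
  refine .mp (.hyp (Or.inr (Or.inl rfl))) ?_
  apply deduction
  exact .mp (.ax (efq b.neg)) (.mp (.hyp (Or.inr (Or.inl rfl))) (.hyp (Or.inl rfl)))

theorem and_right (a b : Sentence α agent) : Provable ((a.and b).imp b) := by
  apply deriv_empty; apply deduction
  apply Deriv.mp (.ax (Provable.s3 b))
  apply deduction
  refine .mp (.hyp (Or.inr (Or.inl rfl))) ?_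
  exact .mp (.ax (Provable.s1 b.neg a)) (.hyp (Or.inl rfl))

theorem neg_imp (φ ψ : Sentence α agent) : Provable (φ.neg.imp (φ.imp ψ)) := by
  apply deriv_empty; apply deduction; apply deduction
  exact .mp (.ax (efq ψ))
    (.mp (.hyp (Or.inr (Or.inl rfl))) (.hyp (Or.inl rfl)))

theorem deriv_conj {Γ : Sentence α agent → Prop} :
    ∀ L : List (Sentence α agent), (∀ ψ ∈ L, Deriv Γ ψ) → Deriv Γ (conjList L)
  | [], _ => .ax (prov_id .perp)
  | φ :: L, h => .mp (.mp (.ax (and_intro φ (conjList L))) (h φ (by simp)))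
      (deriv_conj L (fun ψ hm => h ψ (by simp [hm])))

theorem conj_append_right (L1 L2 : List (Sentence α agent)) :
    Provable ((conjList (L1 ++ L2)).imp (conjList L2)) := by
  induction L1 with
  | nil => exact prov_id _
  | cons a L1 ih => exact prov_trans (and_right a (conjList (L1 ++ L2))) ih

theorem conj_append_left (L1 L2 : List (Sentence α agent)) :
    Provable ((conjList (L1 ++ L2)).imp (conjList L1)) := by
  induction L1 with
  | nil => exact Provable.mp (Provable.s1 _ _) (prov_id .perp)
  | cons a L1 ih =>
    have p1 : Provable ((conjList ((a :: L1) ++ L2)).imp a) :=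
      and_left a (conjList (L1 ++ L2))
    have p2 : Provable ((conjList ((a :: L1) ++ L2)).imp (conjList L1)) :=
      prov_trans (and_right a (conjList (L1 ++ L2))) ih
    have q := prov_trans p1 (and_intro a (conjList L1))
    exact Provable.mp (Provable.mp (Provable.s2 _ _ _) q) p2

theorem finite_char {Γ : Sentence α agent → Prop} {φ} (h : Deriv Γ φ) :
    ∃ L : List (Sentence α agent), (∀ ψ ∈ L, Γ ψ) ∧ Provable ((conjList L).imp φ) := by
  induction h with
  | ax h => exact ⟨[], by simp, Provable.mp (Provable.s1 _ _) h⟩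
  | @hyp φ h => exact ⟨[φ], by simpa, and_left φ (conjList [])⟩
  | @mp φ ψ _ _ ih1 ih2 =>
    obtain ⟨L1, hL1, hp1⟩ := ih1
    obtain ⟨L2, hL2, hp2⟩ := ih2
    refine ⟨L1 ++ L2, ?_, ?_⟩
    · intro x hx; rcases List.mem_append.mp hx with hx | hx
      · exact hL1 x hx
      · exact hL2 x hx
    · have q1 := prov_trans (conj_append_left L1 L2) hp1
      have q2 := prov_trans (conj_append_right L1 L2) hp2
      exact Provable.mp (Provable.mp (Provable.s2 _ _ _) q1) q2

theorem deriv_of_finite {Γ : Sentence α agent → Prop} {φ} {L : List (Sentence α agent)}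
    (hL : ∀ ψ ∈ L, Γ ψ) (hp : Provable ((conjList L).imp φ)) : Deriv Γ φ :=
  .mp (.ax hp) (deriv_conj L (fun ψ hm => .hyp (hL ψ hm)))

theorem consistent_iff {Γ : Sentence α agent → Prop} :
    ConsistentSet Γ ↔ ¬ Deriv Γ .perp := by
  constructor
  · intro hc hd
    obtain ⟨L, hL, hp⟩ := finite_char hd
    exact hc L hL hp
  · intro hnd L hL hp
    exact hnd (deriv_of_finite hL hp)

theorem mcs_nderiv {Γ : Sentence α agent → Prop} (h : MaximalConsistent Γ) :
    ¬ Deriv Γ .perp := consistent_iff.mp h.1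

theorem mcs_closed {Γ : Sentence α agent → Prop} (h : MaximalConsistent Γ) {φ}
    (hd : Deriv Γ φ) : Γ φ := by
  by_contra hn
  rcases h.2 φ with hφ | hφ
  · exact hn hφ
  · exact mcs_nderiv h (.mp (.hyp hφ) hd)

theorem mcs_not {Γ : Sentence α agent → Prop} (h : MaximalConsistent Γ) {φ} :
    ¬ Γ φ ↔ Γ φ.neg := by
  constructor
  · intro hn; rcases h.2 φ with hφ | hφ
    · exact absurd hφ hn
    · exact hφ
  · intro hng hφ
    exact mcs_nderiv h (.mp (.hyp hng) (.hyp hφ))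

theorem mcs_imp {Γ : Sentence α agent → Prop} (h : MaximalConsistent Γ) {φ ψ} :
    Γ (φ.imp ψ) ↔ (Γ φ → Γ ψ) := by
  constructor
  · intro hi hφ; exact mcs_closed h (.mp (.hyp hi) (.hyp hφ))
  · intro hi
    rcases h.2 φ with hφ | hφ
    · exact mcs_closed h (.mp (.ax (Provable.s1 ψ φ)) (.hyp (hi hφ)))
    · exact mcs_closed h (.mp (.ax (neg_imp φ ψ)) (.hyp hφ))

/-! ### Lindenbaum -/

open Classical in
noncomputable def extendStep (Γ : Sentence α agent → Prop) (o : Option (Sentence α agent)) :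
    Sentence α agent → Prop :=
  o.elim Γ (fun φ => if ¬ Deriv (Ins φ Γ) .perp then Ins φ Γ else Ins φ.neg Γ)

noncomputable def extendChain [Encodable (Sentence α agent)]
    (Γ : Sentence α agent → Prop) : ℕ → (Sentence α agent → Prop)
  | 0 => Γ
  | n + 1 => extendStep (extendChain Γ n) (Encodable.decode n)

theorem extendStep_sub {Γ : Sentence α agent → Prop} (o) :
    ∀ ψ, Γ ψ → extendStep Γ o ψ := by
  intro ψ h
  cases o with
  | none => exact h
  | some φ =>
    simp only [extendStep, Option.elim]
    split <;> exact Or.inr h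

theorem extendChain_mono [Encodable (Sentence α agent)] {Γ : Sentence α agent → Prop}
    {m n : ℕ} (h : m ≤ n) : ∀ ψ, extendChain Γ m ψ → extendChain Γ n ψ := by
  induction n with
  | zero => rw [Nat.le_zero.mp h]; exact fun _ h => h
  | succ n ih =>
    rcases Nat.lt_or_ge m (n + 1) with h' | h'
    · intro ψ hψ
      exact extendStep_sub _ ψ (ih (Nat.lt_succ_iff.mp h') ψ hψ)
    · rw [Nat.le_antisymm h h']; exact fun _ h => h

theorem extendChain_consistent [Encodable (Sentence α agent)]
    {Γ : Sentence α agent → Prop} (h : ¬ Deriv Γ .perp) :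
    ∀ n, ¬ Deriv (extendChain Γ n) .perp := by
  intro n
  induction n with
  | zero => exact h
  | succ n ih =>
    show ¬ Deriv (extendStep (extendChain Γ n) (Encodable.decode n)) .perp
    cases hd : (Encodable.decode n : Option (Sentence α agent)) with
    | none => exact ih
    | some φ =>
      simp only [extendStep, Option.elim]
      split
      · assumption
      · next hneg =>
        intro h2
        have d1 : Deriv (extendChain Γ n) φ.neg := deduction (not_not.mp hneg)
        have d2 : Deriv (extendChain Γ n) φ.neg.neg := deduction h2
        exact ih (.mp d2 d1)

def limit [Encodable (Sentence α agent)] (Γ : Sentence α agent → Prop) :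
    Sentence α agent → Prop :=
  fun φ => ∃ n, extendChain Γ n φ

theorem limit_sub [Encodable (Sentence α agent)] {Γ : Sentence α agent → Prop} :
    ∀ ψ, Γ ψ → limit Γ ψ := fun ψ h => ⟨0, h⟩

theorem limit_mcs [Encodable (Sentence α agent)] {Γ : Sentence α agent → Prop}
    (h : ¬ Deriv Γ .perp) : MaximalConsistent (limit Γ) := by
  constructor
  · rw [consistent_iff]
    intro hd
    obtain ⟨L, hL, hp⟩ := finite_char hd
    have : ∃ N, ∀ ψ ∈ L, extendChain Γ N ψ := by
      clear hp
      induction L with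
      | nil => exact ⟨0, by simp⟩
      | cons a L ih =>
        obtain ⟨N, hN⟩ := ih (fun ψ hm => hL ψ (by simp [hm]))
        obtain ⟨n, hn⟩ := hL a (by simp)
        refine ⟨max n N, ?_⟩
        intro ψ hψ
        rcases List.mem_cons.mp hψ with rfl | hψ
        · exact extendChain_mono (le_max_left n N) ψ hn
        · exact extendChain_mono (le_max_right n N) ψ (hN ψ hψ)
    obtain ⟨N, hN⟩ := this
    exact extendChain_consistent h N (deriv_of_finite hN hp)
  · intro φ
    set n := Encodable.encode φ with hn
    have hstep : extendChain Γ (n + 1) = extendStep (extendChain Γ n) (Encodable.decode n) :=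
      rfl
    have hdec : (Encodable.decode n : Option (Sentence α agent)) = some φ :=
      Encodable.encodek φ
    rw [hdec] at hstep
    simp only [extendStep, Option.elim] at hstep
    by_cases hc : ¬ Deriv (Ins φ (extendChain Γ n)) Sentence.perp
    · left; exact ⟨n + 1, by rw [hstep, if_pos hc]; exact Or.inl rfl⟩
    · right; exact ⟨n + 1, by rw [hstep, if_neg hc]; exact Or.inl rfl⟩

/-! ### Modal lemmas -/

theorem lemT' (i : agent) (φ : Sentence α agent) :
    Provable (φ.imp (Sentence.box i φ.neg).neg) := by
  apply deriv_empty; apply deduction; apply deduction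
  exact .mp (.mp (.ax (Provable.ref i φ.neg)) (.hyp (Or.inl rfl)))
    (.hyp (Or.inr (Or.inl rfl)))

theorem lemB (i : agent) (φ : Sentence α agent) :
    Provable (φ.imp (Sentence.box i (Sentence.box i φ.neg).neg)) :=
  prov_trans (lemT' i φ) (Provable.sym i φ.neg)

theorem lem5' (i : agent) (φ : Sentence α agent) :
    Provable ((Sentence.box i (Sentence.box i φ).neg).neg.imp (Sentence.box i φ)) :=
  prov_trans (contrapose1 (Provable.sym i φ)) (Provable.s3 (Sentence.box i φ))

theorem box4 (i : agent) (φ : Sentence α agent) :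
    Provable ((Sentence.box i φ).imp (Sentence.box i (Sentence.box i φ))) := by
  have h1 : Provable ((Sentence.box i (Sentence.box i (Sentence.box i φ).neg).neg).imp
      (Sentence.box i (Sentence.box i φ))) :=
    Provable.mp (Provable.distr i _ _) (Provable.nec i (lem5' i φ))
  exact prov_trans (lemB i (Sentence.box i φ)) h1

theorem box_and2 (i : agent) (a b : Sentence α agent) :
    Provable ((Sentence.box i a).imp ((Sentence.box i b).imp (Sentence.box i (a.and b)))) := by
  have h1 := Provable.nec i (and_intro a b)
  have h2 := Provable.mp (Provable.distr i a (b.imp (a.and b))) h1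
  exact prov_trans h2 (Provable.distr i b (a.and b))

theorem box_conj {Γ : Sentence α agent → Prop} (i : agent) :
    ∀ L : List (Sentence α agent), (∀ ψ ∈ L, Deriv Γ (Sentence.box i ψ)) →
      Deriv Γ (Sentence.box i (conjList L))
  | [], _ => .ax (Provable.nec i (prov_id .perp))
  | a :: L, h => .mp (.mp (.ax (box_and2 i a (conjList L))) (h a (by simp)))
      (box_conj i L (fun ψ hm => h ψ (by simp [hm])))

/-! ### Canonical model -/

def MCSW (α agent : Type) := {Γ : Sentence α agent → Prop // MaximalConsistent Γ}

def canonical (α agent : Type) : Worlds α agent (MCSW α agent) where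
  f := fun Γ p => Γ.1 (.atom p)
  view := fun i Γ Δ => ∀ φ, Γ.1 (.box i φ) → Δ.1 φ
  equiv := fun i => by
    constructor
    · intro Γ φ h
      exact mcs_closed Γ.2 (.mp (.ax (Provable.ref i φ)) (.hyp h))
    · intro Γ Δ h φ hΔ
      by_contra hn
      have h1 : Γ.1 (Sentence.box i φ).neg := by
        apply (mcs_not Γ.2).mp
        intro hb
        exact hn (mcs_closed Γ.2 (.mp (.ax (Provable.ref i φ)) (.hyp hb)))
      have h2 : Γ.1 (Sentence.box i (Sentence.box i φ).neg) :=
        mcs_closed Γ.2 (.mp (.ax (Provable.sym i φ)) (.hyp h1))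
      have h3 : Δ.1 (Sentence.box i φ).neg := h _ h2
      exact (mcs_not Δ.2).mpr h3 hΔ
    · intro Γ Δ Θ h1 h2 φ hb
      exact h2 φ (h1 _ (mcs_closed Γ.2 (.mp (.ax (box4 i φ)) (.hyp hb))))

theorem truth [Encodable (Sentence α agent)] {φ : Sentence α agent} (hs : Static φ) :
    ∀ Γ : MCSW α agent, eval (canonical α agent) Γ φ ↔ Γ.1 φ := by
  induction hs with
  | atom p => intro Γ; exact Iff.rfl
  | perp =>
    intro Γ
    constructor
    · exact fun h => h.elim
    · intro h; exact mcs_nderiv Γ.2 (.hyp h)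
  | imp h1 h2 ih1 ih2 =>
    intro Γ
    simp only [eval]
    constructor
    · intro h
      exact (mcs_imp Γ.2).mpr fun ha => (ih2 Γ).mp (h ((ih1 Γ).mpr ha))
    · intro h ha
      exact (ih2 Γ).mpr ((mcs_imp Γ.2).mp h ((ih1 Γ).mp ha))
  | @box i ψ hψ ih =>
    intro Γ
    simp only [eval]
    constructor
    · intro h
      by_contra hn
      set BΓ : Sentence α agent → Prop := fun χ => Γ.1 (.box i χ) with hBΓ
      have hcons : ¬ Deriv (Ins ψ.neg BΓ) .perp := by
        intro hd
        have d1 : Deriv BΓ ψ.neg.neg := deduction hd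
        have d2 : Deriv BΓ ψ := .mp (.ax (Provable.s3 ψ)) d1
        obtain ⟨L, hL, hp⟩ := finite_char d2
        have hbox : Deriv Γ.1 (Sentence.box i (conjList L)) :=
          box_conj i L (fun χ hm => .hyp (hL χ hm))
        have hboxψ : Deriv Γ.1 (Sentence.box i ψ) :=
          .mp (.ax (Provable.mp (Provable.distr i _ ψ) (Provable.nec i hp))) hbox
        exact hn (mcs_closed Γ.2 hboxψ)
      let Δ : MCSW α agent := ⟨limit (Ins ψ.neg BΓ), limit_mcs hcons⟩
      have hview : ∀ χ, Γ.1 (.box i χ) → Δ.1 χ :=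
        fun χ hb => limit_sub _ (Or.inr hb)
      have heval : eval (canonical α agent) Δ ψ := h Δ hview
      have hf : Δ.1 ψ := (ih Δ).mp heval
      have hnf : Δ.1 ψ.neg := limit_sub _ (Or.inl rfl)
      exact mcs_nderiv Δ.2 (.mp (.hyp hnf) (.hyp hf))
    · intro h Δ hv
      exact (ih Δ).mpr (hv _ h)

end S5C

theorem completeness {α agent : Type} [Encodable (Sentence α agent)]
    (φ : Sentence α agent) (hφ : Static φ)
    (h : ∀ (W : Type) (M : Worlds α agent W) (s : W), eval M s φ) :
    Provable φ := by
  by_contra hp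
  have hcons : ¬ S5C.Deriv (S5C.Ins φ.neg S5C.Emp) .perp := by
    intro hd
    have d1 : S5C.Deriv S5C.Emp φ.neg.neg := S5C.deduction hd
    exact hp (Provable.mp (Provable.s3 φ) (S5C.deriv_empty d1))
  have hmcs := S5C.limit_mcs hcons
  set Γ : S5C.MCSW α agent := ⟨S5C.limit (S5C.Ins φ.neg S5C.Emp), hmcs⟩ with hΓ
  have heval := h (S5C.MCSW α agent) (S5C.canonical α agent) Γ
  have hf : Γ.1 φ := (S5C.truth hφ Γ).mp heval
  have hnf : Γ.1 φ.neg := S5C.limit_sub _ (Or.inl rfl)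
  exact S5C.mcs_nderiv Γ.2 (.mp (.hyp hnf) (.hyp hf))
end

section
/- Every consistent static sentence is satisfiable: assuming sentences are encodable, if {φ} is a consistent set and φ is static, then there exists a pointed S5 model at which φ holds. -/
/-!
Henkin's canonical model. Its worlds are the maximal consistent sets, which exist above every
consistent set by Zorn's lemma, and two worlds are `i`-related when they contain the same
`□ᵢ`-sentences, so each relation is an equivalence for free. Axioms 4 (derivable from T and 5)
and 5 give every world lacking `□ᵢφ` an `i`-neighbour lacking `φ`; together with T this yields the
truth lemma for static sentences, so a consistent `φ` holds at any maximal consistent set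
containing it.
-/

variable {α agent : Type}

inductive Derives (Γ : Set (Sentence α agent)) : Sentence α agent → Prop
  | ax {φ} : Provable φ → Derives Γ φ
  | hyp {φ} : φ ∈ Γ → Derives Γ φ
  | mp {φ ψ} : Derives Γ (φ.imp ψ) → Derives Γ φ → Derives Γ ψ

-- Consistency through derivations from hypotheses rather than conjunctions (as in `ConsistentSet`),
-- so that the deduction theorem and compactness are direct inductions.
def Consistent (Γ : Set (Sentence α agent)) : Prop :=
  ¬ Derives Γ .perp

namespace Derives

variable {Γ Δ : Set (Sentence α agent)} {φ ψ : Sentence α agent}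

theorem mono (h : Derives Γ φ) (hΓΔ : Γ ⊆ Δ) : Derives Δ φ := by
  induction h with
  | ax hp => exact ax hp
  | hyp hφ => exact hyp (hΓΔ hφ)
  | mp _ _ ih₁ ih₂ => exact mp ih₁ ih₂

theorem provable (h : Derives ∅ φ) : Provable φ := by
  induction h with
  | ax hp => exact hp
  | hyp hφ => exact (Set.notMem_empty _ hφ).elim
  | mp _ _ ih₁ ih₂ => exact .mp ih₁ ih₂

theorem imp_self : Derives Γ (φ.imp φ) :=
  mp (mp (ax (.s2 φ (φ.imp φ) φ)) (ax (.s1 φ (φ.imp φ)))) (ax (.s1 φ φ))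

theorem deduction (h : Derives (insert φ Γ) ψ) : Derives Γ (φ.imp ψ) := by
  induction h with
  | ax hp => exact mp (ax (.s1 _ φ)) (ax hp)
  | hyp hψ =>
    rcases hψ with rfl | hψ
    · exact imp_self
    · exact mp (ax (.s1 _ φ)) (hyp hψ)
  | mp _ _ ih₁ ih₂ => exact mp (mp (ax (.s2 _ _ _)) ih₁) ih₂

theorem of_neg_neg (h : Derives Γ φ.neg.neg) : Derives Γ φ :=
  mp (ax (.s3 φ)) h

theorem absurd (h₁ : Derives Γ φ.neg) (h₂ : Derives Γ φ) : Derives Γ .perp :=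
  mp h₁ h₂

theorem of_perp (h : Derives Γ .perp) : Derives Γ φ :=
  of_neg_neg (mp (ax (.s1 _ φ.neg)) h)

theorem box (i : agent) (h : Derives (Sentence.box i ⁻¹' Γ) φ) :
    Derives Γ (.box i φ) := by
  induction h with
  | ax hp => exact ax (.nec i hp)
  | hyp hφ => exact hyp hφ
  | mp _ _ ih₁ ih₂ => exact mp (mp (ax (.distr i _ _)) ih₁) ih₂

theorem exists_mem_of_sUnion {c : Set (Set (Sentence α agent))}
    (hc : IsChain (· ⊆ ·) c) (hne : c.Nonempty) (h : Derives (⋃₀ c) φ) :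
    ∃ Γ ∈ c, Derives Γ φ := by
  induction h with
  | ax hp => exact hne.imp fun Γ hΓ => ⟨hΓ, ax hp⟩
  | hyp hφ =>
    obtain ⟨Γ, hΓ, hφΓ⟩ := hφ
    exact ⟨Γ, hΓ, hyp hφΓ⟩
  | mp _ _ ih₁ ih₂ =>
    obtain ⟨Γ₁, hΓ₁, h₁⟩ := ih₁
    obtain ⟨Γ₂, hΓ₂, h₂⟩ := ih₂
    obtain ⟨Γ, hΓ, hΓ₁Γ, hΓ₂Γ⟩ := hc.directedOn Γ₁ hΓ₁ Γ₂ hΓ₂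
    exact ⟨Γ, hΓ, mp (h₁.mono hΓ₁Γ) (h₂.mono hΓ₂Γ)⟩

end Derives

namespace Provable

variable {φ ψ χ : Sentence α agent}

theorem of_derives_singleton (h : Derives {φ} ψ) : Provable (φ.imp ψ) :=
  Derives.provable (Derives.deduction (by simpa using h))

theorem imp_trans (h₁ : Provable (φ.imp ψ)) (h₂ : Provable (ψ.imp χ)) :
    Provable (φ.imp χ) :=
  of_derives_singleton (.mp (.ax h₂) (.mp (.ax h₁) (.hyp rfl)))

theorem neg_imp_neg (h : Provable (φ.imp ψ)) : Provable (ψ.neg.imp φ.neg) := by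
  have : Derives {φ, ψ.neg} .perp :=
    .absurd (φ := ψ) (.hyp (by simp)) (.mp (.ax h) (.hyp (by simp)))
  exact of_derives_singleton this.deduction

theorem imp_neg_neg (φ : Sentence α agent) : Provable (φ.imp φ.neg.neg) := by
  have : Derives {φ.neg, φ} .perp := .absurd (φ := φ) (.hyp (by simp)) (.hyp (by simp))
  exact of_derives_singleton this.deduction

theorem and_imp_left (φ ψ : Sentence α agent) : Provable ((φ.and ψ).imp φ) := by
  have h : Derives {φ, φ.neg, φ.and ψ} ψ.neg :=
    .of_perp (.absurd (φ := φ) (.hyp (by simp)) (.hyp (by simp)))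
  have : Derives {φ.neg, φ.and ψ} .perp :=
    .absurd (φ := φ.imp ψ.neg) (.hyp (by simp [Sentence.and])) h.deduction
  exact of_derives_singleton (.of_neg_neg this.deduction)

theorem imp_box_dia (i : agent) (φ : Sentence α agent) :
    Provable (φ.imp (Sentence.box i (Sentence.box i φ.neg).neg)) :=
  imp_trans (imp_trans (imp_neg_neg φ) (neg_imp_neg (ref i φ.neg))) (sym i φ.neg)

theorem box_imp_box_box (i : agent) (φ : Sentence α agent) :
    Provable ((Sentence.box i φ).imp (Sentence.box i (Sentence.box i φ))) := by
  have dia_box : Provable ((Sentence.box i (Sentence.box i φ).neg).neg.imp (Sentence.box i φ)) :=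
    imp_trans (neg_imp_neg (sym i φ)) (s3 _)
  exact imp_trans (imp_box_dia i (Sentence.box i φ)) (mp (distr i _ _) (nec i dia_box))

end Provable

namespace Consistent

variable {Γ : Set (Sentence α agent)} {φ ψ : Sentence α agent}

theorem insert_iff : Consistent (insert φ Γ) ↔ ¬ Derives Γ φ.neg :=
  ⟨fun hcon hneg => hcon (.absurd (hneg.mono (Set.subset_insert _ _)) (.hyp (Set.mem_insert _ _))),
    fun hneg hder => hneg hder.deduction⟩

theorem of_consistentSet_singleton (h : ConsistentSet (fun ψ => ψ = φ)) :
    Consistent {φ} := fun hder =>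
  h [φ] (by simp) (Provable.imp_trans (.and_imp_left φ _) (.of_derives_singleton hder))

theorem exists_maximal_superset (h : Consistent Γ) :
    ∃ Δ, Γ ⊆ Δ ∧ Maximal Consistent Δ := by
  refine zorn_subset_nonempty {Δ | Consistent Δ} (fun c hcon hchain hne => ?_) Γ h
  refine ⟨⋃₀ c, fun hder => ?_, fun _ => Set.subset_sUnion_of_mem⟩
  obtain ⟨Δ, hΔ, hΔder⟩ := hder.exists_mem_of_sUnion hchain hne
  exact hcon hΔ hΔder

theorem mem_of_derives (hΓ : Maximal Consistent Γ) (h : Derives Γ φ) : φ ∈ Γ :=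
  hΓ.mem_of_prop_insert (insert_iff.2 fun hneg => hΓ.1 (.absurd hneg h))

theorem perp_notMem (hΓ : Maximal Consistent Γ) : Sentence.perp ∉ Γ :=
  fun h => hΓ.1 (.hyp h)

theorem neg_mem_iff (hΓ : Maximal Consistent Γ) : φ.neg ∈ Γ ↔ φ ∉ Γ :=
  ⟨fun hneg hφ => hΓ.1 (.absurd (.hyp hneg) (.hyp hφ)), fun hφ => mem_of_derives hΓ
    (by_contra fun hneg => hφ (hΓ.mem_of_prop_insert (insert_iff.2 hneg)))⟩

theorem imp_mem_iff (hΓ : Maximal Consistent Γ) : φ.imp ψ ∈ Γ ↔ (φ ∈ Γ → ψ ∈ Γ) := by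
  refine ⟨fun h hφ => mem_of_derives hΓ (.mp (.hyp h) (.hyp hφ)), fun h => ?_⟩
  by_cases hφ : φ ∈ Γ
  · exact mem_of_derives hΓ (.mp (.ax (.s1 ψ φ)) (.hyp (h hφ)))
  · have hneg : φ.neg ∈ insert φ Γ := Set.mem_insert_of_mem _ ((neg_mem_iff hΓ).2 hφ)
    exact mem_of_derives hΓ
      (.deduction (.of_perp (.absurd (.hyp hneg) (.hyp (Set.mem_insert _ _)))))

end Consistent

def CanonicalWorld (α agent : Type) : Type :=
  {Γ : Set (Sentence α agent) // Maximal Consistent Γ}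

def canonicalModel (α agent : Type) : Worlds α agent (CanonicalWorld α agent) where
  f Γ p := .atom p ∈ Γ.1
  view i Γ Δ := Sentence.box i ⁻¹' Γ.1 = Sentence.box i ⁻¹' Δ.1
  equiv _ := ⟨fun _ => rfl, Eq.symm, Eq.trans⟩

theorem exists_view_notMem {Γ : CanonicalWorld α agent} {i : agent} {φ : Sentence α agent}
    (h : .box i φ ∉ Γ.1) :
    ∃ Δ : CanonicalWorld α agent, (canonicalModel α agent).view i Γ Δ ∧ φ ∉ Δ.1 := by
  have hcon : Consistent (insert φ.neg (Sentence.box i ⁻¹' Γ.1)) :=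
    Consistent.insert_iff.2 fun hder =>
      h (Consistent.mem_of_derives Γ.2 (.box i hder.of_neg_neg))
  obtain ⟨Δ, hsub, hΔ⟩ := Consistent.exists_maximal_superset hcon
  have boxed_mem {χ : Sentence α agent} (hχ : Provable (χ.imp (.box i χ))) (hχΓ : χ ∈ Γ.1) :
      χ ∈ Δ := by
    have hbox : Sentence.box i χ ∈ Γ.1 :=
      Consistent.mem_of_derives Γ.2 (.mp (.ax hχ) (.hyp hχΓ))
    exact hsub (Set.mem_insert_of_mem _ hbox)
  refine ⟨⟨Δ, hΔ⟩, Set.ext fun ψ => ⟨boxed_mem (.box_imp_box_box i ψ), fun hψΔ => ?_⟩,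
    (Consistent.neg_mem_iff hΔ).1 (hsub (Set.mem_insert _ _))⟩
  by_contra hψΓ
  have hnegΔ := boxed_mem (.sym i ψ) ((Consistent.neg_mem_iff Γ.2).2 hψΓ)
  exact (Consistent.neg_mem_iff hΔ).1 hnegΔ hψΔ

theorem eval_canonicalModel_iff {φ : Sentence α agent} (hφ : Static φ)
    (Γ : CanonicalWorld α agent) : eval (canonicalModel α agent) Γ φ ↔ φ ∈ Γ.1 := by
  induction hφ generalizing Γ with
  | atom p => rfl
  | perp => exact iff_of_false id (Consistent.perp_notMem Γ.2)
  | imp _ _ ih₁ ih₂ =>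
    exact (imp_congr (ih₁ Γ) (ih₂ Γ)).trans (Consistent.imp_mem_iff Γ.2).symm
  | @box i φ _ ih =>
    refine ⟨fun h => by_contra fun hφ => ?_, fun h Δ hΓΔ => (ih Δ).2 ?_⟩
    · obtain ⟨Δ, hΓΔ, hφΔ⟩ := exists_view_notMem hφ
      exact hφΔ ((ih Δ).1 (h Δ hΓΔ))
    · have hΔ : φ ∈ Sentence.box i ⁻¹' Δ.1 := hΓΔ ▸ h
      exact Consistent.mem_of_derives Δ.2 (.mp (.ax (.ref i φ)) (.hyp hΔ))

theorem consistent_satisfiable_general {α agent : Type}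
    (φ : Sentence α agent) (hφ : Static φ)
    (h : ConsistentSet (fun ψ => ψ = φ)) :
    ∃ (W : Type) (M : Worlds α agent W) (s : W), eval M s φ := by
  obtain ⟨Δ, hφΔ, hΔ⟩ := Consistent.exists_maximal_superset (.of_consistentSet_singleton h)
  exact ⟨_, canonicalModel α agent, ⟨Δ, hΔ⟩, (eval_canonicalModel_iff hφ _).2 (hφΔ rfl)⟩

theorem consistent_satisfiable {α agent : Type} [Encodable (Sentence α agent)]
    (φ : Sentence α agent) (hφ : Static φ)
    (h : ConsistentSet (fun ψ => ψ = φ)) :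
    ∃ (W : Type) (M : Worlds α agent W) (s : W), eval M s φ :=
  consistent_satisfiable_general φ hφ h
end
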